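/- arXiv:2301.06354 — 2 statements merged into one kernel-verified Lean document; each statement's English description precedes it below -/
import Mathlib

section
/- Let δ be an m×r binary matrix with unordered GLT structure satisfying the 3579 counting rule CR(r,1): every combination of q ∈ {1,…,r} columns of δ has at least 2q+1 nonzero rows. Then, outside a set of Lebesgue measure zero in the parametrization of Θ_δ by the nonzero entries, every Λ̃ ∈ Θ_δ is variance identified: whenever Λ̃ Λ̃ᵀ + Σ̃ = Λ' Λ'ᵀ + Σ' with Σ̃, Σ' diagonal positive definite m×m matrices and Λ' an m×r unordered GLT matrix, it follows that Σ' = Σ̃, Λ' Λ'ᵀ = Λ̃ Λ̃ᵀ, and Λ' = Λ̃ P_± P_ρ for some signed permutation matrix P_± P_ρ. -/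
open Matrix

/-- The counting rule `CR(r,s)`: every submatrix formed by a nonempty set `S` of
columns has at least `2 * |S| + s` nonzero rows. -/
def CR {I : Type*} [Fintype I] {r : ℕ} (δ : Matrix I (Fin r) Bool) (s : ℕ) : Prop :=
  ∀ S : Finset (Fin r), S.Nonempty →
    2 * S.card + s ≤ (@Finset.filter I (fun i : I => ∃ j ∈ S, δ i j = true)
      (fun _ => inferInstance) Finset.univ).card

/-- A binary matrix with unordered GLT structure: pairwise distinct pivot rows. -/
def IsGLTBool {m r : ℕ} (δ : Matrix (Fin m) (Fin r) Bool) : Prop :=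
  ∃ l : Fin r → Fin m, Function.Injective l ∧
    ∀ j : Fin r, δ (l j) j = true ∧ ∀ i : Fin m, i < l j → δ i j = false

/-- `Λ` is an unordered GLT matrix. -/
def IsUnorderedGLT {m r : ℕ} (Λ : Matrix (Fin m) (Fin r) ℝ) : Prop :=
  Λ.rank = r ∧ ∃ l : Fin r → Fin m, Function.Injective l ∧
    ∀ j : Fin r, (∀ i : Fin m, i < l j → Λ i j = 0) ∧ Λ (l j) j ≠ 0

/-- `P` is a signed permutation matrix. -/
def IsSignedPerm {r : ℕ} (P : Matrix (Fin r) (Fin r) ℝ) : Prop :=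
  ∃ (σ : Equiv.Perm (Fin r)) (ε : Fin r → ℝ), (∀ j, ε j = 1 ∨ ε j = -1) ∧
    ∀ i j, P i j = if σ i = j then ε i else 0

/-- The matrix with sparsity pattern `δ` whose entries at the positions of the
ones of `δ` are the coordinates of the parameter vector `x`. -/
def matrixOfPattern {m r : ℕ} (δ : Matrix (Fin m) (Fin r) Bool)
    (x : {p : Fin m × Fin r // δ p.1 p.2 = true} → ℝ) : Matrix (Fin m) (Fin r) ℝ :=
  Matrix.of fun i j => if h : δ i j = true then x ⟨(i, j), h⟩ else 0

/-- `Λ` is variance identified: whenever `Λ Λᵀ + Σ = Λ' Λ'ᵀ + Σ'` with `Σ`, `Σ'`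
diagonal positive definite and `Λ'` an unordered GLT matrix, then `Σ' = Σ`,
`Λ' Λ'ᵀ = Λ Λᵀ` and `Λ'` is a signed permutation of `Λ`. -/
def VarianceIdentified {m r : ℕ} (Λ : Matrix (Fin m) (Fin r) ℝ) : Prop :=
  ∀ (Λ' : Matrix (Fin m) (Fin r) ℝ) (d d' : Fin m → ℝ),
    (∀ i, 0 < d i) → (∀ i, 0 < d' i) → IsUnorderedGLT Λ' →
    Λ * Λᵀ + Matrix.diagonal d = Λ' * Λ'ᵀ + Matrix.diagonal d' →
    Matrix.diagonal d' = Matrix.diagonal d ∧ Λ' * Λ'ᵀ = Λ * Λᵀ ∧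
      ∃ P : Matrix (Fin r) (Fin r) ℝ, IsSignedPerm P ∧ Λ' = Λ * P

/-! The Anderson–Rubin argument: if `Λ` has, for every row `i`, two disjoint sets of `r` rows
avoiding `i` on which it is nonsingular, then the `i`-th diagonal entry of `Λ Λᵀ` is a rational
function of its off-diagonal entries, so `Λ Λᵀ + Σ` determines `Σ` and `Λ Λᵀ`. Equal Gram matrices
give `Λ' = Λ M` with `M` orthogonal, and comparing pivot rows of `Λ` and `Λ'` forces `M` to be a
signed permutation. By Hall's theorem, `CR(r,1)` provides such row sets for the pattern `δ`, and
the corresponding minors and the pivot entries are nonzero polynomials in the free entries (the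
minors are `1` at a suitable `0/1` point), so they vanish only on a Lebesgue-null set. -/

open MeasureTheory

namespace MvPolynomial

theorem volume_setOf_eval_eq_zero_fin :
    ∀ {n : ℕ} {p : MvPolynomial (Fin n) ℝ}, p ≠ 0 → volume {x | eval x p = 0} = 0
  | 0, p, hp => by
    obtain ⟨c, rfl⟩ := C_surjective (Fin 0) p
    have hc : c ≠ 0 := by rintro rfl; exact hp C_0
    simp [hc]
  | n + 1, p, hp => by
    set q := finSuccEquiv ℝ n p
    have hq : q ≠ 0 := EmbeddingLike.map_ne_zero_iff.mpr hp
    have hZ : MeasurableSet {x | eval x p = 0} :=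
      (isClosed_eq (continuous_eval p) continuous_const).measurableSet
    set e := MeasurableEquiv.piFinSuccAbove (fun _ : Fin (n + 1) => ℝ) 0
    set T := e.symm ⁻¹' {x | eval x p = 0}
    -- The section of `T` at `s` is the root set of `q` specialised at `s`: finite unless the
    -- leading coefficient of `q` vanishes at `s`, which by induction happens on a null set.
    have hsection : ∀ s, eval s q.leadingCoeff ≠ 0 → volume ((·, s) ⁻¹' T) = 0 := by
      intro s hs
      have hqs : Polynomial.map (eval s) q ≠ 0 := fun h0 => hs <| by
        simpa [Polynomial.coeff_map] using congrArg (Polynomial.coeff · q.natDegree) h0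
      have hroots : (·, s) ⁻¹' T = {y | (Polynomial.map (eval s) q).IsRoot y} := by
        ext y
        simp only [T, e, q, Set.mem_preimage, Set.mem_ofPred_eq, Polynomial.IsRoot.def,
          MeasurableEquiv.piFinSuccAbove_symm_apply, Fin.insertNthEquiv_zero,
          ← eval_eq_eval_mv_eval']
        rfl
      rw [hroots]
      exact (Polynomial.finite_setOfPred_isRoot hqs).measure_zero _
    have hae : ∀ᵐ s : Fin n → ℝ, volume ((·, s) ⁻¹' T) = 0 :=
      measure_mono_null (fun s => Not.imp_symm (hsection s))
        (volume_setOf_eval_eq_zero_fin (Polynomial.leadingCoeff_ne_zero.mpr hq))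
    calc volume {x | eval x p = 0} = volume.prod volume T :=
          (((measurePreserving_piFinSuccAbove (fun _ => volume) 0).symm e).measure_preimage
            hZ.nullMeasurableSet).symm
      _ = ∫⁻ s, volume ((·, s) ⁻¹' T) := Measure.prod_apply_symm (e.symm.measurable hZ)
      _ = 0 := (lintegral_congr_ae hae).trans lintegral_zero

theorem volume_setOf_eval_eq_zero {ι : Type*} [Fintype ι] {p : MvPolynomial ι ℝ} (hp : p ≠ 0) :
    volume {x : ι → ℝ | eval x p = 0} = 0 := by
  let e := Fintype.equivFin ι
  have hq : rename e p ≠ 0 := (map_ne_zero_iff _ (rename_injective e e.injective)).mpr hp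
  have hpre : {x : ι → ℝ | eval x p = 0} =
      MeasurableEquiv.piCongrLeft (fun _ => ℝ) e ⁻¹' {y | eval y (rename e p) = 0} := by
    ext x
    simp only [Set.mem_preimage, Set.mem_ofPred_eq, eval_rename, MeasurableEquiv.coe_piCongrLeft]
    rw [show Equiv.piCongrLeft (fun _ => ℝ) e x ∘ e = x from
      _root_.funext (Equiv.piCongrLeft_apply_apply (fun _ => ℝ) e x)]
  rw [hpre, (volume_measurePreserving_piCongrLeft (fun _ => ℝ) e).measure_preimage
    (isClosed_eq (continuous_eval _) continuous_const).nullMeasurableSet]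
  exact volume_setOf_eval_eq_zero_fin hq

end MvPolynomial

namespace IsSignedPerm

variable {r : ℕ} {P Q : Matrix (Fin r) (Fin r) ℝ}

theorem mul_transpose_self (hP : IsSignedPerm P) : P * Pᵀ = 1 := by
  obtain ⟨σ, ε, hε, hP⟩ := hP
  ext i j
  rw [mul_apply, Finset.sum_eq_single (σ i) (fun b _ hb => by simp [hP, Ne.symm hb]) (by simp)]
  rcases eq_or_ne i j with rfl | hij
  · rcases hε i with h | h <;> simp [hP, h]
  · simp [hP, σ.injective.ne hij.symm, one_apply_ne hij]

theorem transpose (hP : IsSignedPerm P) : IsSignedPerm Pᵀ := by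
  obtain ⟨σ, ε, hε, hP⟩ := hP
  refine ⟨σ.symm, ε ∘ σ.symm, fun i => hε _, fun i j => ?_⟩
  rw [transpose_apply, hP]
  rcases eq_or_ne (σ j) i with rfl | h
  · simp
  · simp [h, σ.symm_apply_eq, Ne.symm h]

theorem mul (hP : IsSignedPerm P) (hQ : IsSignedPerm Q) : IsSignedPerm (P * Q) := by
  obtain ⟨σ, ε, hε, hP⟩ := hP
  obtain ⟨τ, η, hη, hQ⟩ := hQ
  refine ⟨σ.trans τ, fun i => ε i * η (σ i), fun i => ?_, fun i j => ?_⟩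
  · rcases hε i with h | h <;> rcases hη (σ i) with h' | h' <;> simp [h, h']
  · rw [mul_apply, Finset.sum_eq_single (σ i) (fun b _ hb => by simp [hP, Ne.symm hb]) (by simp)]
    by_cases h : τ (σ i) = j <;> simp [hP, hQ, h]

end IsSignedPerm

theorem VarianceIdentified.mul {m r : ℕ} {Λ : Matrix (Fin m) (Fin r) ℝ}
    (hΛ : VarianceIdentified Λ) {P : Matrix (Fin r) (Fin r) ℝ} (hP : IsSignedPerm P) :
    VarianceIdentified (Λ * P) := by
  have hgram : Λ * P * (Λ * P)ᵀ = Λ * Λᵀ := by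
    rw [transpose_mul, Matrix.mul_assoc, ← Matrix.mul_assoc P, hP.mul_transpose_self,
      Matrix.one_mul]
  intro Λ' d d' hd hd' hΛ' heq
  rw [hgram] at heq ⊢
  obtain ⟨hdiag, hgram', Q, hQ, rfl⟩ := hΛ Λ' d d' hd hd' hΛ' heq
  refine ⟨hdiag, hgram', Pᵀ * Q, hP.transpose.mul hQ, ?_⟩
  rw [Matrix.mul_assoc, ← Matrix.mul_assoc P, hP.mul_transpose_self, Matrix.one_mul]

structure HasPivotRows {ι κ R : Type*} [LinearOrder ι] [Zero R] (Λ : Matrix ι κ R) (l : κ → ι) :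
    Prop where
  injective : Function.Injective l
  apply_eq_zero_of_lt : ∀ j i, i < l j → Λ i j = 0
  apply_ne_zero : ∀ j, Λ (l j) j ≠ 0

namespace HasPivotRows

variable {ι κ R : Type*} [LinearOrder ι] [Fintype κ]

theorem mulVec_injective [CommRing R] [IsDomain R] {Λ : Matrix ι κ R} {l : κ → ι}
    (hΛ : HasPivotRows Λ l) : Function.Injective Λ.mulVec := by
  classical
  refine (injective_iff_map_eq_zero Λ.mulVecLin).mpr fun x hx => ?_
  by_contra hx0
  obtain ⟨j, hj, hmin⟩ := (Finset.univ.filter (x · ≠ 0)).exists_min_image l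
    (Function.ne_iff.mp hx0 |>.imp fun j hj => by simpa using hj)
  -- `l j` is the least pivot row in the support of `x`, so `(Λ *ᵥ x) (l j) = Λ (l j) j * x j`.
  have hrow := congrFun hx (l j)
  rw [mulVecLin_apply, mulVec, dotProduct, Finset.sum_eq_single j] at hrow
  · exact (Finset.mem_filter.mp hj).2 ((mul_eq_zero.mp hrow).resolve_left (hΛ.apply_ne_zero j))
  · intro b _ hb
    by_cases hxb : x b = 0
    · rw [hxb, mul_zero]
    · have hlt : l j < l b :=
        (hmin b (by simpa using hxb)).lt_of_ne (hΛ.injective.ne (Ne.symm hb))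
      rw [hΛ.apply_eq_zero_of_lt b _ hlt, zero_mul]
  · simp

theorem apply_eq_zero_of_mul_eq [WellFoundedLT ι] [Semiring R] [NoZeroDivisors R]
    {Λ Λ' : Matrix ι κ R} {M : Matrix κ κ R} {l l' : κ → ι}
    (hΛ : HasPivotRows Λ l) (hΛ' : HasPivotRows Λ' l') (h : Λ' = Λ * M) {j k : κ}
    (hjk : l j < l' k) : M j k = 0 := by
  induction hlj : l j using WellFoundedLT.induction generalizing j with
  | ind i ih =>
    have hrow : (Λ * M) (l j) k = 0 := h ▸ hΛ'.apply_eq_zero_of_lt k _ hjk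
    rw [mul_apply, Finset.sum_eq_single j] at hrow
    · exact (mul_eq_zero.mp hrow).resolve_left (hΛ.apply_ne_zero j)
    · intro b _ hb
      rcases lt_trichotomy (l b) (l j) with hlt | heq | hgt
      · rw [ih _ (hlj ▸ hlt) (hlt.trans hjk) rfl, mul_zero]
      · exact absurd (hΛ.injective heq) hb
      · rw [hΛ.apply_eq_zero_of_lt b _ hgt, zero_mul]
    · simp

theorem isSignedPerm_of_mul_eq [WellFoundedLT ι] {r : ℕ} {Λ Λ' : Matrix ι (Fin r) ℝ}
    {M : Matrix (Fin r) (Fin r) ℝ} {l l' : Fin r → ι} (hΛ : HasPivotRows Λ l)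
    (hΛ' : HasPivotRows Λ' l') (hM : M * Mᵀ = 1) (h : Λ' = Λ * M) : IsSignedPerm M := by
  have h' : Λ = Λ' * Mᵀ := by rw [h, Matrix.mul_assoc, hM, Matrix.mul_one]
  have hsupp : ∀ j k, M j k ≠ 0 → l' k = l j := fun j k hjk => by
    rcases lt_trichotomy (l j) (l' k) with hlt | heq | hgt
    · exact absurd (hΛ.apply_eq_zero_of_mul_eq hΛ' h hlt) hjk
    · exact heq.symm
    · exact absurd (hΛ'.apply_eq_zero_of_mul_eq hΛ h' hgt) hjk
  have hrow : ∀ j, ∑ k, M j k * M j k = 1 := fun j => by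
    simpa [mul_apply, one_apply] using congrFun (congrFun hM j) j
  have hex : ∀ j, ∃ k, M j k ≠ 0 := fun j => by
    by_contra! h0
    simpa [h0] using hrow j
  choose τ hτ using hex
  have hτ_inj : Function.Injective τ := fun a b hab =>
    hΛ.injective (by rw [← hsupp a _ (hτ a), ← hsupp b _ (hτ b), hab])
  have hoff : ∀ j k, k ≠ τ j → M j k = 0 := fun j k hk => by
    by_contra h0
    exact hk (hΛ'.injective ((hsupp j k h0).trans (hsupp j _ (hτ j)).symm))
  have hsq : ∀ j, M j (τ j) * M j (τ j) = 1 := fun j => by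
    rw [← hrow j, Finset.sum_eq_single (τ j) (fun k _ hk => by rw [hoff j k hk, mul_zero])
      (by simp)]
  refine ⟨Equiv.ofBijective τ hτ_inj.bijective_of_finite, fun j => M j (τ j),
    fun j => mul_self_eq_one_iff.mp (hsq j), fun i j => ?_⟩
  by_cases hij : τ i = j
  · simp [← hij]
  · simp [hij, hoff i j (Ne.symm hij)]

end HasPivotRows

namespace Matrix

variable {K ι κ : Type*} [Fintype κ] [DecidableEq κ]

theorem isUnit_transpose_mul_self [Fintype ι] {Λ : Matrix ι κ ℝ}
    (hΛ : Function.Injective Λ.mulVec) : IsUnit (Λᵀ * Λ) := by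
  rw [← mulVec_injective_iff_isUnit]
  refine (injective_iff_map_eq_zero (Λᵀ * Λ).mulVecLin).mpr fun v hv => hΛ ?_
  rw [← conjTranspose_eq_transpose_of_trivial] at hv
  rw [mulVec_zero]
  exact (conjTranspose_mul_self_mulVec_eq_zero Λ v).mp hv

theorem exists_mul_eq_of_mul_transpose_eq [Fintype ι] {Λ Λ' : Matrix ι κ ℝ}
    (hΛ : Function.Injective Λ.mulVec) (h : Λ' * Λ'ᵀ = Λ * Λᵀ) :
    ∃ M : Matrix κ κ ℝ, M * Mᵀ = 1 ∧ Λ' = Λ * M := by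
  set G := Λᵀ * Λ
  have hG : IsUnit G.det := (isUnit_iff_isUnit_det G).mp (isUnit_transpose_mul_self hΛ)
  have hGt : G⁻¹ᵀ = G⁻¹ := by rw [transpose_nonsing_inv, transpose_mul, transpose_transpose]
  -- `Λ * M` is the orthogonal projection of `Λ'` onto the column space of `Λ`.
  set M := G⁻¹ * Λᵀ * Λ'
  have hMM : M * Mᵀ = 1 := by
    calc M * Mᵀ = G⁻¹ * Λᵀ * (Λ' * Λ'ᵀ) * Λ * G⁻¹ := by
          simp only [M, transpose_mul, hGt, transpose_transpose, Matrix.mul_assoc]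
      _ = G⁻¹ * G * (G * G⁻¹) := by rw [h]; simp only [G, Matrix.mul_assoc]
      _ = 1 := by rw [nonsing_inv_mul _ hG, mul_nonsing_inv _ hG, Matrix.one_mul]
  have hcross : Λ * M * Λ'ᵀ = Λ * Λᵀ := by
    calc Λ * M * Λ'ᵀ = Λ * G⁻¹ * (Λᵀ * (Λ' * Λ'ᵀ)) := by simp only [M, Matrix.mul_assoc]
      _ = Λ * (G⁻¹ * G) * Λᵀ := by rw [h]; simp only [G, Matrix.mul_assoc]
      _ = Λ * Λᵀ := by rw [nonsing_inv_mul _ hG, Matrix.mul_one]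
  have hcross' : Λ' * (Λ * M)ᵀ = Λ * Λᵀ := by
    simpa only [transpose_mul, transpose_transpose, Matrix.mul_assoc] using
      congrArg transpose hcross
  have hsq : Λ * M * (Λ * M)ᵀ = Λ * Λᵀ := by
    rw [transpose_mul, Matrix.mul_assoc, ← Matrix.mul_assoc M, hMM, Matrix.one_mul]
  have hzero : (Λ * M - Λ') * (Λ * M - Λ')ᵀ = 0 := by
    rw [transpose_sub, Matrix.sub_mul, Matrix.mul_sub, Matrix.mul_sub, hsq, hcross, hcross', h,
      sub_self]
  refine ⟨M, hMM, (sub_eq_zero.mp (self_mul_conjTranspose_eq_zero.mp ?_)).symm⟩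
  simpa using hzero

theorem mul_transpose_self_apply_self_eq_dotProduct_inv_mulVec [Field K] (Λ : Matrix ι κ K)
    {A B : κ → ι} (hA : IsUnit (Λ.submatrix A id).det) (hB : IsUnit (Λ.submatrix B id).det)
    (i : ι) :
    (Λ * Λᵀ) i i = (fun a => (Λ * Λᵀ) (A a) i) ⬝ᵥ
      (((Λ * Λᵀ).submatrix B A)⁻¹ *ᵥ fun b => (Λ * Λᵀ) (B b) i) := by
  set v : κ → K := fun j => Λ i j
  set G := Λ.submatrix A id
  set H := Λ.submatrix B id
  change v ⬝ᵥ v = (G *ᵥ v) ⬝ᵥ ((H * Gᵀ)⁻¹ *ᵥ (H *ᵥ v))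
  rw [mul_inv_rev, ← mulVec_mulVec, mulVec_mulVec v H⁻¹ H, nonsing_inv_mul _ hB, one_mulVec,
    ← transpose_nonsing_inv, dotProduct_mulVec, vecMul_transpose, mulVec_mulVec v G⁻¹ G,
    nonsing_inv_mul _ hA, one_mulVec]

theorem mul_transpose_self_apply_self_eq_of_offDiag_eq [Field K] {Λ Λ' : Matrix ι κ K}
    (hoff : ∀ p q, p ≠ q → (Λ * Λᵀ) p q = (Λ' * Λ'ᵀ) p q) {A B : κ → ι}
    (hAB : ∀ a b, A a ≠ B b) {i : ι} (hAi : ∀ a, A a ≠ i) (hBi : ∀ b, B b ≠ i)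
    (hA : IsUnit (Λ.submatrix A id).det) (hB : IsUnit (Λ.submatrix B id).det) :
    (Λ * Λᵀ) i i = (Λ' * Λ'ᵀ) i i := by
  have hC : (Λ * Λᵀ).submatrix B A = (Λ' * Λ'ᵀ).submatrix B A :=
    ext fun b a => hoff _ _ (hAB a b).symm
  have hC' : IsUnit ((Λ'.submatrix B id).det * (Λ'.submatrix A id).det) := by
    rw [← det_transpose (Λ'.submatrix A id), ← det_mul]
    change IsUnit ((Λ' * Λ'ᵀ).submatrix B A).det
    rw [← hC]
    change IsUnit (Λ.submatrix B id * (Λ.submatrix A id)ᵀ).det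
    rw [det_mul, det_transpose]
    exact hB.mul hA
  rw [mul_transpose_self_apply_self_eq_dotProduct_inv_mulVec Λ hA hB,
    mul_transpose_self_apply_self_eq_dotProduct_inv_mulVec Λ' (isUnit_of_mul_isUnit_right hC')
      (isUnit_of_mul_isUnit_left hC'), hC]
  congr 2 with a
  · exact hoff _ _ (hAi a)
  · exact hoff _ _ (hBi a)

end Matrix

theorem HasPivotRows.varianceIdentified {m r : ℕ} {Λ : Matrix (Fin m) (Fin r) ℝ}
    {l : Fin r → Fin m} (hΛ : HasPivotRows Λ l)
    (hblocks : ∀ i, ∃ f : Fin r × Bool → Fin m, Function.Injective f ∧ (∀ jb, f jb ≠ i) ∧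
      ∀ b, IsUnit (Λ.submatrix (fun j => f (j, b)) id).det) :
    VarianceIdentified Λ := by
  rintro Λ' d d' - - ⟨-, l', hl', hpiv'⟩ heq
  have hΛ' : HasPivotRows Λ' l' := ⟨hl', fun j i hi => (hpiv' j).1 i hi, fun j => (hpiv' j).2⟩
  have hoff : ∀ p q, p ≠ q → (Λ * Λᵀ) p q = (Λ' * Λ'ᵀ) p q := fun p q hpq => by
    simpa [diagonal_apply_ne _ hpq] using congrFun (congrFun heq p) q
  have hd : d = d' := funext fun i => by
    obtain ⟨f, hf, hfi, hdet⟩ := hblocks i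
    have hii := mul_transpose_self_apply_self_eq_of_offDiag_eq hoff
      (fun a b => hf.ne (by simp)) (fun a => hfi _) (fun b => hfi _) (hdet false) (hdet true)
    have hdiag := congrFun (congrFun heq i) i
    simp only [Matrix.add_apply, diagonal_apply_eq] at hdiag
    linarith
  subst hd
  have hgram : Λ' * Λ'ᵀ = Λ * Λᵀ := (add_right_cancel heq).symm
  obtain ⟨M, hM, rfl⟩ := exists_mul_eq_of_mul_transpose_eq hΛ.mulVec_injective hgram
  exact ⟨rfl, hgram, M, hΛ.isSignedPerm_of_mul_eq hΛ' hM rfl, rfl⟩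

open Finset in
theorem CR.exists_injective_avoiding {I : Type*} [Fintype I] {r : ℕ}
    {δ : Matrix I (Fin r) Bool} (hcr : CR δ 1) (i : I) :
    ∃ f : Fin r × Bool → I, Function.Injective f ∧ ∀ jb, f jb ≠ i ∧ δ (f jb) jb.1 = true := by
  classical
  -- Hall's theorem for matching two copies of every column to rows other than `i`: a set `S` of
  -- columns has at least `2 * #S + 1` nonzero rows, so at least `2 * #S` of them avoid `i`.
  let t : Fin r × Bool → Finset I := fun jb => {p | p ≠ i ∧ δ p jb.1 = true}
  suffices hall : ∀ s : Finset (Fin r × Bool), #s ≤ #(s.biUnion t) by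
    obtain ⟨f, hf, hft⟩ := (all_card_le_biUnion_card_iff_exists_injective t).mp hall
    exact ⟨f, hf, fun jb => by simpa [t] using hft jb⟩
  intro s
  rcases s.eq_empty_or_nonempty with rfl | hs
  · simp
  set S := s.image Prod.fst
  have hsS : #s ≤ 2 * #S := calc
    #s ≤ #(S ×ˢ (univ : Finset Bool)) :=
      card_le_card fun x hx => mem_product.mpr ⟨mem_image_of_mem _ hx, mem_univ _⟩
    _ = 2 * #S := by simp [mul_comm]
  set W := (univ : Finset I).filter fun p => ∃ j ∈ S, δ p j = true
  have hW : 2 * #S + 1 ≤ #W := by convert hcr S (hs.image _)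
  have hWs : W.erase i ⊆ s.biUnion t := by
    intro p hp
    obtain ⟨hpi, hpW⟩ := mem_erase.mp hp
    obtain ⟨j, hjS, hδ⟩ := (mem_filter.mp hpW).2
    obtain ⟨⟨j', b⟩, hjb, rfl⟩ := mem_image.mp hjS
    exact mem_biUnion.mpr ⟨(j', b), hjb, by simpa [t] using ⟨hpi, hδ⟩⟩
  calc #s ≤ #W - 1 := by omega
    _ ≤ #(W.erase i) := pred_card_le_card_erase
    _ ≤ #(s.biUnion t) := card_le_card hWs

section Pattern

open MvPolynomial

variable {m r : ℕ} (δ : Matrix (Fin m) (Fin r) Bool)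

noncomputable def polyMatrixOfPattern :
    Matrix (Fin m) (Fin r) (MvPolynomial {p : Fin m × Fin r // δ p.1 p.2 = true} ℝ) :=
  Matrix.of fun i j => if h : δ i j = true then X ⟨(i, j), h⟩ else 0

theorem map_eval_polyMatrixOfPattern (x : {p : Fin m × Fin r // δ p.1 p.2 = true} → ℝ) :
    (polyMatrixOfPattern δ).map (eval x) = matrixOfPattern δ x := by
  ext i j
  by_cases h : δ i j = true <;> simp [polyMatrixOfPattern, matrixOfPattern, h]

theorem eval_det_polyMatrixOfPattern_submatrix (x : {p : Fin m × Fin r // δ p.1 p.2 = true} → ℝ)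
    (A : Fin r → Fin m) :
    eval x ((polyMatrixOfPattern δ).submatrix A id).det =
      ((matrixOfPattern δ x).submatrix A id).det := by
  rw [RingHom.map_det, RingHom.mapMatrix_apply, ← submatrix_map, map_eval_polyMatrixOfPattern]

theorem det_polyMatrixOfPattern_submatrix_ne_zero {A : Fin r → Fin m} (hA : Function.Injective A)
    (hδ : ∀ j, δ (A j) j = true) : ((polyMatrixOfPattern δ).submatrix A id).det ≠ 0 := by
  -- At the `0/1` point supported on the positions `(A j, j)` the block is the identity matrix.
  let x : {p : Fin m × Fin r // δ p.1 p.2 = true} → ℝ := fun p => if p.1.1 = A p.1.2 then 1 else 0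
  have hx : (matrixOfPattern δ x).submatrix A id = 1 := by
    ext a b
    by_cases hab : a = b
    · subst hab
      simp [matrixOfPattern, x, hδ]
    · simp [matrixOfPattern, x, one_apply_ne hab, hA.eq_iff, hab]
  intro h0
  simpa [h0, hx] using eval_det_polyMatrixOfPattern_submatrix δ x A

theorem hasPivotRows_matrixOfPattern {l : Fin r → Fin m} (hl : Function.Injective l)
    (hpiv : ∀ j, δ (l j) j = true ∧ ∀ i, i < l j → δ i j = false)
    {x : {p : Fin m × Fin r // δ p.1 p.2 = true} → ℝ} (hx : ∀ j, x ⟨(l j, j), (hpiv j).1⟩ ≠ 0) :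
    HasPivotRows (matrixOfPattern δ x) l :=
  ⟨hl, fun j i hi => by simp [matrixOfPattern, (hpiv j).2 i hi], fun j => by
    simpa [matrixOfPattern, (hpiv j).1] using hx j⟩

end Pattern

/-- Corollary 1(a): if a binary matrix `δ` with unordered GLT structure
satisfies the 3579 counting rule `CR(r,1)`, then, outside a Lebesgue null set in
the parametrization of `Θ_δ` by the nonzero entries, every element of `Θ_δ`
(i.e. every signed permutation of a GLT matrix with pattern `δ`) is variance
identified. -/
theorem counting_rule_implies_variance_identification_ae {m r : ℕ}
    (δ : Matrix (Fin m) (Fin r) Bool) (hglt : IsGLTBool δ) (hcr : CR δ 1) :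
    MeasureTheory.volume
      {x : {p : Fin m × Fin r // δ p.1 p.2 = true} → ℝ |
        ¬ ∀ P : Matrix (Fin r) (Fin r) ℝ, IsSignedPerm P →
          VarianceIdentified (matrixOfPattern δ x * P)} = 0 := by
  obtain ⟨l, hl, hpiv⟩ := hglt
  choose f hf hfi using hcr.exists_injective_avoiding
  let p := (∏ j, MvPolynomial.X ⟨(l j, j), (hpiv j).1⟩) *
    ∏ i, ∏ b, ((polyMatrixOfPattern δ).submatrix (fun j => f i (j, b)) id).det
  have hp : p ≠ 0 := mul_ne_zero
    (Finset.prod_ne_zero_iff.mpr fun j _ => MvPolynomial.X_ne_zero _)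
    (Finset.prod_ne_zero_iff.mpr fun i _ => Finset.prod_ne_zero_iff.mpr fun b _ =>
      det_polyMatrixOfPattern_submatrix_ne_zero δ ((hf i).comp (Prod.mk_left_injective b))
        fun j => (hfi i (j, b)).2)
  refine measure_mono_null (fun x hx => ?_) (MvPolynomial.volume_setOf_eval_eq_zero hp)
  by_contra hpx
  simp only [p, Set.mem_ofPred_eq, map_mul, map_prod, MvPolynomial.eval_X,
    eval_det_polyMatrixOfPattern_submatrix, mul_ne_zero_iff, Finset.prod_ne_zero_iff,
    Finset.mem_univ, forall_const] at hpx hx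
  refine hx fun P hP => VarianceIdentified.mul ?_ hP
  exact (hasPivotRows_matrixOfPattern δ hl hpiv hpx.1).varianceIdentified fun i =>
    ⟨f i, hf i, fun jb => (hfi i jb).1, fun b => isUnit_iff_ne_zero.mpr (hpx.2 i b)⟩
end

section
/- Let l_1 < ⋯ < l_r be row indices in {1,…,m} satisfying l_j ≤ m − 2(r − j + 1) for every j = 1,…,r, and let δ be the m×r binary matrix of a dense ordered GLT structure with these pivots, i.e., δ_{ij} = 1 if i ≥ l_j and δ_{ij} = 0 otherwise. Then δ satisfies the 3579 counting rule CR(r,1): every combination of q ∈ {1,…,r} columns of δ has at least 2q+1 nonzero rows. Hence condition GLT-AR is sufficient for the row deletion property for dense GLT structures (outside a null set of loading values). -/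
open Matrix

open Finset

/- Only the leftmost column `j₀` of a column set `S` matters: `S ⊆ [j₀, r)` has at most `r - j₀`
elements, while the nonzero rows of `S` include those of column `j₀`, of which GLT-AR guarantees
at least `2 (r - j₀) + 1` in a dense structure. -/

lemma Fin.card_le_sub_of_forall_le {r : ℕ} {S : Finset (Fin r)} {j₀ : Fin r}
    (h : ∀ j ∈ S, j₀ ≤ j) : #S ≤ r - j₀ := by
  simpa only [Fin.card_Ici] using card_le_card fun j hj => mem_Ici.2 (h j hj)

lemma CR_of_card_column_support {I : Type*} [Fintype I] {r : ℕ} (δ : Matrix I (Fin r) Bool)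
    (s : ℕ) (hcol : ∀ j, 2 * (r - j) + s ≤ #{i | δ i j = true}) : CR δ s := by
  intro S hS
  obtain ⟨j₀, hj₀, hmin⟩ := S.exists_min_image id hS
  have hcard : #S ≤ r - j₀ := Fin.card_le_sub_of_forall_le hmin
  calc 2 * #S + s ≤ 2 * (r - j₀) + s := by omega
    _ ≤ #{i | δ i j₀ = true} := hcol j₀
    _ ≤ _ := card_le_card fun i hi => by
      simp only [mem_filter, mem_univ, true_and] at hi ⊢
      exact ⟨j₀, hj₀, hi⟩

lemma Fin.card_filter_le_eq_sub {m : ℕ} (k : Fin m) : #{i : Fin m | k ≤ i} = m - k := by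
  simpa only [Fin.card_Ici] using congrArg card (filter_le_eq_Ici (a := k))

/-- Pivots are 0-based, so the paper's `l_j ≤ m − 2(r − j + 1)` reads
`l j + 1 ≤ m − 2 (r − j)`. -/
theorem dense_GLT_AR_implies_counting_rule_general {m r : ℕ}
    (l : Fin r → Fin m)
    (hAR : ∀ j : Fin r, (l j : ℕ) + 1 ≤ m - 2 * (r - (j : ℕ))) :
    CR (Matrix.of fun (i : Fin m) (j : Fin r) => decide (l j ≤ i)) 1 := by
  refine CR_of_card_column_support _ 1 fun j => ?_
  simp only [of_apply, decide_eq_true_eq, Fin.card_filter_le_eq_sub]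
  have := hAR j
  omega

/-- Condition GLT-AR for dense ordered GLT structures: if the pivot rows
`l 0 < ... < l (r-1)` satisfy `l_j ≤ m − 2(r − j + 1)` (in 1-based indexing,
which for 0-based indices reads `(l j) + 1 ≤ m − 2(r − j)`), then the binary
matrix of the dense ordered GLT structure with these pivots (all entries from
the pivot row downwards nonzero) satisfies the 3579 counting rule `CR(r,1)`. -/
theorem dense_GLT_AR_implies_counting_rule {m r : ℕ}
    (l : Fin r → Fin m) (hmono : StrictMono l)
    (hAR : ∀ j : Fin r, (l j : ℕ) + 1 ≤ m - 2 * (r - (j : ℕ))) :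
    CR (Matrix.of fun (i : Fin m) (j : Fin r) => decide (l j ≤ i)) 1 :=
  dense_GLT_AR_implies_counting_rule_general l hAR
end
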